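/- arXiv:alg-geom/9707006 — 4 statements merged into one kernel-verified Lean document; each statement's English description precedes it below -/
import Mathlib

section
/- Let K be a field of characteristic 0 and n ≥ 1. A point (s,t,u,x₁,…,x_{2n}) ∈ K^{3+2n} satisfies x_j² − x_j = 0 for 1 ≤ j ≤ n, x_{n+1} − Σ_{k=1}^n 2^{k−1}x_k = 0, and x_{n+i} − x_{n+i−1}² = 0 for 2 ≤ i ≤ n, if and only if there exists (l₁,…,lₙ) ∈ {0,1}ⁿ such that x_j = l_j for 1 ≤ j ≤ n and x_{n+i} = l^{2^{i−1}} for 1 ≤ i ≤ n, where l := Σ_{j=1}^n l_j·2^{j−1} (the bits l_j and the powers l^{2^{i−1}} being regarded as elements of K via the natural-number cast). -/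
/-- A point `(s,t,u,x₁,…,x_{2n}) ∈ K^{3+2n}` (over a field `K` of characteristic 0)
satisfies `x_j² - x_j = 0` for `1 ≤ j ≤ n`, `x_{n+1} - ∑_{k=1}^n 2^(k-1) x_k = 0` and
`x_{n+i} - x_{n+i-1}² = 0` for `2 ≤ i ≤ n` iff there is a bit vector
`(l₁,…,lₙ) ∈ {0,1}ⁿ` with `x_j = l_j` (`1 ≤ j ≤ n`) and `x_{n+i} = l^(2^(i-1))`
(`1 ≤ i ≤ n`) where `l = ∑_{j=1}^n l_j 2^(j-1)`. (The coordinates are 1-indexed.) -/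
theorem stmt2 (K : Type*) [Field K] [CharZero K] (n : ℕ) (hn : 1 ≤ n)
    (s t u : K) (x : ℕ → K) :
    ((∀ j, 1 ≤ j → j ≤ n → x j ^ 2 - x j = 0) ∧
      (x (n + 1) - ∑ k ∈ Finset.Icc 1 n, 2 ^ (k - 1) * x k = 0) ∧
      (∀ i, 2 ≤ i → i ≤ n → x (n + i) - x (n + i - 1) ^ 2 = 0)) ↔
    (∃ l : ℕ → ℕ, (∀ j, 1 ≤ j → j ≤ n → l j ≤ 1) ∧
      (∀ j, 1 ≤ j → j ≤ n → x j = (l j : K)) ∧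
      (∀ i, 1 ≤ i → i ≤ n →
        x (n + i) = ((∑ j ∈ Finset.Icc 1 n, l j * 2 ^ (j - 1) : ℕ) : K) ^ 2 ^ (i - 1))) := by
  classical
  constructor
  · rintro ⟨h1, h2, h3⟩
    have hbit : ∀ j, 1 ≤ j → j ≤ n → x j = 0 ∨ x j = 1 := by
      intro j hj1 hj2
      have h := h1 j hj1 hj2
      have h' : x j * (x j - 1) = 0 := by linear_combination h
      rcases mul_eq_zero.mp h' with h'' | h''
      · exact Or.inl h''
      · exact Or.inr (sub_eq_zero.mp h'')
    set l : ℕ → ℕ := fun j => if x j = 1 then 1 else 0 with hl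
    have hxl : ∀ j, 1 ≤ j → j ≤ n → x j = (l j : K) := by
      intro j hj1 hj2
      rcases hbit j hj1 hj2 with h | h <;> simp [hl, h]
    have hLcast : ((∑ j ∈ Finset.Icc 1 n, l j * 2 ^ (j - 1) : ℕ) : K)
        = ∑ k ∈ Finset.Icc 1 n, 2 ^ (k - 1) * x k := by
      push_cast
      refine Finset.sum_congr rfl ?_
      intro j hj
      rw [Finset.mem_Icc] at hj
      rw [hxl j hj.1 hj.2]; ring
    refine ⟨l, ?_, hxl, ?_⟩
    · intro j _ _
      simp only [hl]
      split <;> simp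
    · intro i hi1
      induction i with
      | zero => omega
      | succ m ih =>
        intro hin
        rcases Nat.lt_or_ge m 1 with h | hm1
        · have hm : m = 0 := by omega
          subst hm
          simp only [Nat.add_sub_cancel, pow_zero, pow_one]
          rw [hLcast]
          exact sub_eq_zero.mp h2
        · have key := h3 (m + 1) (by omega) hin
          have hprev := ih (by omega) (by omega)
          have hidx : n + (m + 1) - 1 = n + m := by omega
          rw [hidx] at key
          have hx : x (n + (m + 1)) = x (n + m) ^ 2 := sub_eq_zero.mp key
          rw [hx, hprev, ← pow_mul]
          congr 1
          have h2' : m + 1 - 1 = (m - 1) + 1 := by omega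
          rw [h2', pow_succ]
  · rintro ⟨l, hl1, hl2, hl3⟩
    refine ⟨?_, ?_, ?_⟩
    · intro j hj1 hj2
      rw [hl2 j hj1 hj2]
      rcases Nat.le_one_iff_eq_zero_or_eq_one.mp (hl1 j hj1 hj2) with h | h <;>
        rw [h] <;> norm_num
    · have h := hl3 1 le_rfl hn
      simp only [Nat.sub_self, pow_zero, pow_one] at h
      rw [h]
      have hLcast : ((∑ j ∈ Finset.Icc 1 n, l j * 2 ^ (j - 1) : ℕ) : K)
          = ∑ k ∈ Finset.Icc 1 n, 2 ^ (k - 1) * x k := by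
        push_cast
        refine Finset.sum_congr rfl ?_
        intro j hj
        rw [Finset.mem_Icc] at hj
        rw [hl2 j hj.1 hj.2]; ring
      rw [hLcast]; ring
    · intro i hi2 hin
      have h := hl3 i (by omega) hin
      have h' := hl3 (i - 1) (by omega) (by omega)
      have hidx : n + i - 1 = n + (i - 1) := by omega
      rw [h, hidx, h', ← pow_mul]
      have : 2 ^ (i - 1 - 1) * 2 = 2 ^ (i - 1) := by
        rw [← pow_succ]
        congr 1
        omega
      rw [this]
      ring
end

section
/- Let n ≥ 1 and let (l₁,…,lₙ) ∈ {0,1}ⁿ with l := Σ_{j=1}^n l_j·2^{j−1}. Substituting X_j := l_j for 1 ≤ j ≤ n and X_{n+i} := l^{2^{i−1}} for 1 ≤ i ≤ n into F yields the identity F(S,T,U,l₁,…,lₙ,l,l²,…,l^{2^{n−1}}) = U^l · (1 + S·Σ_{(p,q)} T^p·l^q) in ℚ[S,T,U], where the sum ranges over all pairs (p,q) with 0 ≤ p, q < 2ⁿ and p + q = 2ⁿ − 1. -/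
open MvPolynomial

/-- The polynomial `F := (1 + S·∏_{i=1}^n (T^(2^(i-1)) + X_{n+i})) ·
∏_{j=1}^n ((U^(2^(j-1)) - 1)·X_j + 1)` in `ℚ[S,T,U,X₁,…,X_{2n}]`, where the
variables are encoded as `S = X 0`, `T = X 1`, `U = X 2`, `X_j = X (2 + j)` for
`1 ≤ j ≤ 2n` (i.e. `X_{j+1} = X (3 + j)` for `0 ≤ j < 2n`). -/
noncomputable def Fpoly (n : ℕ) : MvPolynomial ℕ ℚ :=
  (1 + X 0 * ∏ i ∈ Finset.range n, (X 1 ^ 2 ^ i + X (3 + n + i))) *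
    ∏ j ∈ Finset.range n, ((X 2 ^ 2 ^ j - 1) * X (3 + j) + 1)

lemma key_prod {R : Type*} [CommRing R] (x y : R) (n : ℕ) :
    ∏ i ∈ Finset.range n, (x ^ 2 ^ i + y ^ 2 ^ i) =
      ∑ p ∈ Finset.range (2 ^ n), x ^ p * y ^ (2 ^ n - 1 - p) := by
  induction n with
  | zero => simp
  | succ n ih =>
    have h2 : (2:ℕ) ^ (n+1) = 2 ^ n + 2 ^ n := by rw [pow_succ]; ring
    rw [Finset.prod_range_succ, ih, h2, Finset.sum_range_add, mul_add, add_comm,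
      Finset.sum_mul, Finset.sum_mul]
    congr 1
    · apply Finset.sum_congr rfl
      intro p hp
      rw [Finset.mem_range] at hp
      have : 2 ^ n + 2 ^ n - 1 - p = 2 ^ n + (2 ^ n - 1 - p) := by omega
      rw [this, pow_add]; ring
    · apply Finset.sum_congr rfl
      intro p hp
      rw [Finset.mem_range] at hp
      have : 2 ^ n + 2 ^ n - 1 - (2 ^ n + p) = 2 ^ n - 1 - p := by omega
      rw [this, pow_add]; ring

lemma filter_sum {R : Type*} [AddCommMonoid R] (f : ℕ → ℕ → R) (n : ℕ) :
    ∑ pq ∈ (Finset.range (2 ^ n) ×ˢ Finset.range (2 ^ n)).filter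
        (fun pq => pq.1 + pq.2 = 2 ^ n - 1), f pq.1 pq.2 =
      ∑ p ∈ Finset.range (2 ^ n), f p (2 ^ n - 1 - p) := by
  have h1 : (1:ℕ) ≤ 2 ^ n := Nat.one_le_two_pow
  apply Finset.sum_nbij' (fun pq => pq.1) (fun p => (p, 2 ^ n - 1 - p))
  · intro pq h
    simp only [Finset.mem_filter, Finset.mem_product, Finset.mem_range] at h
    simp [Finset.mem_range]; omega
  · intro p h
    simp only [Finset.mem_range] at h
    simp only [Finset.mem_filter, Finset.mem_product, Finset.mem_range]; omega
  · intro pq h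
    simp only [Finset.mem_filter, Finset.mem_product, Finset.mem_range] at h
    ext <;> simp <;> omega
  · intro p h; rfl
  · intro pq h
    simp only [Finset.mem_filter, Finset.mem_product, Finset.mem_range] at h
    congr 1; omega

/-- Substituting `X_j := l_j` (`1 ≤ j ≤ n`) and `X_{n+i} := l^(2^(i-1))` (`1 ≤ i ≤ n`)
into `F` yields `F(S,T,U,l₁,…,lₙ,l,l²,…,l^(2^(n-1))) = U^l·(1 + S·∑_{(p,q)} T^p l^q)`,
the sum ranging over `0 ≤ p,q < 2^n` with `p + q = 2^n - 1`. -/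
theorem stmt3 (n : ℕ) (hn : 1 ≤ n) (l : ℕ → ℕ) (hl : ∀ j < n, l j ≤ 1) :
    aeval (fun k => if k < 3 then (X k : MvPolynomial ℕ ℚ)
        else if k < 3 + n then C ((l (k - 3) : ℚ))
        else C (((∑ j ∈ Finset.range n, l j * 2 ^ j : ℕ) : ℚ) ^ 2 ^ (k - 3 - n)))
      (Fpoly n) =
    X 2 ^ (∑ j ∈ Finset.range n, l j * 2 ^ j) *
      (1 + X 0 * ∑ pq ∈ (Finset.range (2 ^ n) ×ˢ Finset.range (2 ^ n)).filter
            (fun pq => pq.1 + pq.2 = 2 ^ n - 1),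
          X 1 ^ pq.1 * C (((∑ j ∈ Finset.range n, l j * 2 ^ j : ℕ) : ℚ) ^ pq.2)) := by
  set φ : ℕ → MvPolynomial ℕ ℚ := fun k => if k < 3 then (X k : MvPolynomial ℕ ℚ)
        else if k < 3 + n then C ((l (k - 3) : ℚ))
        else C (((∑ j ∈ Finset.range n, l j * 2 ^ j : ℕ) : ℚ) ^ 2 ^ (k - 3 - n)) with hφ
  set L : ℕ := ∑ j ∈ Finset.range n, l j * 2 ^ j with hLdef
  have hφ0 : φ 0 = X 0 := by simp [hφ]
  have hφ1 : φ 1 = X 1 := by simp [hφ]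
  have hφ2 : φ 2 = X 2 := by simp [hφ]
  have hφj : ∀ j < n, φ (3 + j) = C ((l j : ℚ)) := by
    intro j hj
    simp only [hφ]
    rw [if_neg (by omega), if_pos (by omega)]
    have h3 : 3 + j - 3 = j := by omega
    rw [h3]
  have hφi : ∀ i < n, φ (3 + n + i) = C ((L : ℚ)) ^ 2 ^ i := by
    intro i hi
    simp only [hφ]
    rw [if_neg (by omega), if_neg (by omega), ← C_pow]
    have h3 : 3 + n + i - 3 - n = i := by omega
    rw [h3]
  rw [Fpoly]
  simp only [map_mul, map_add, map_one, map_pow, map_sub, map_prod, aeval_X, hφ0, hφ1, hφ2]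
  have hA : ∏ j ∈ Finset.range n, ((X 2 ^ 2 ^ j - 1) * φ (3 + j) + 1)
      = (X 2 : MvPolynomial ℕ ℚ) ^ L := by
    rw [hLdef, ← Finset.prod_pow_eq_pow_sum]
    apply Finset.prod_congr rfl
    intro j hj
    rw [Finset.mem_range] at hj
    rw [hφj j hj]
    have := hl j hj
    interval_cases h : l j
    · simp
    · simp [pow_mul']
  have hB : ∏ i ∈ Finset.range n, ((X 1 : MvPolynomial ℕ ℚ) ^ 2 ^ i + φ (3 + n + i))
      = ∑ p ∈ Finset.range (2 ^ n), X 1 ^ p * C ((L : ℚ)) ^ (2 ^ n - 1 - p) := by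
    rw [Finset.prod_congr rfl (fun i hi => by rw [hφi i (Finset.mem_range.mp hi)]),
      key_prod]
  have hC : ∑ pq ∈ (Finset.range (2 ^ n) ×ˢ Finset.range (2 ^ n)).filter
        (fun pq => pq.1 + pq.2 = 2 ^ n - 1),
        (X 1 : MvPolynomial ℕ ℚ) ^ pq.1 * C ((L : ℚ)) ^ pq.2 =
      ∑ p ∈ Finset.range (2 ^ n), X 1 ^ p * C ((L : ℚ)) ^ (2 ^ n - 1 - p) :=
    filter_sum (fun p q => (X 1 : MvPolynomial ℕ ℚ) ^ p * C ((L:ℚ)) ^ q) n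
  rw [hA, hB, hC]
  ring
end

section
/- Let n ≥ 1 and N ∈ ℕ. Suppose A₁,…,A_N ∈ ℚ[S,T] are polynomials such that each specialization A_j(0,T) ∈ ℚ[T] is a constant polynomial, with constant value α_j ∈ ℚ. Suppose Q₀,…,Q_{2ⁿ−1} ∈ ℚ[Z₁,…,Z_N] satisfy Q_l(A₁,…,A_N) = c_l in ℚ[S,T] for every 0 ≤ l < 2ⁿ. Then for every t ∈ ℚ, the vector ( Σ_{(p,q): 0≤p,q<2ⁿ, p+q=2ⁿ−1} t^p·l^q )_{0≤l<2ⁿ} ∈ ℚ^{2ⁿ} equals the Jacobian matrix ( (∂Q_l/∂Z_j)(α₁,…,α_N) )_{0≤l<2ⁿ, 1≤j≤N} applied to the vector ( (∂A_j/∂S)(0,t) )_{1≤j≤N}; in particular it lies in the range of this Jacobian viewed as a ℚ-linear map ℚ^N → ℚ^{2ⁿ}. -/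
open MvPolynomial

/-- The index set of pairs `(p,q)` with `0 ≤ p,q < 2^n` and `p + q = 2^n - 1`. -/
def pairs (n : ℕ) : Finset (ℕ × ℕ) :=
  (Finset.range (2 ^ n) ×ˢ Finset.range (2 ^ n)).filter
    (fun pq => pq.1 + pq.2 = 2 ^ n - 1)

/-- `c l := 1 + S·∑_{(p,q) ∈ pairs n} T^p·l^q ∈ ℚ[S,T]`, with `S = X 0`, `T = X 1`. -/
noncomputable def c (n l : ℕ) : MvPolynomial (Fin 2) ℚ :=
  1 + X 0 * ∑ pq ∈ pairs n, X 1 ^ pq.1 * C ((l : ℚ) ^ pq.2)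

lemma chain {N : ℕ} (A : Fin N → MvPolynomial (Fin 2) ℚ) (i : Fin 2)
    (Q : MvPolynomial (Fin N) ℚ) :
    pderiv i (aeval A Q) = ∑ j, aeval A (pderiv j Q) * pderiv i (A j) := by
  induction Q using MvPolynomial.induction_on with
  | C a => simp
  | add p q hp hq => simp only [map_add, hp, hq, add_mul, Finset.sum_add_distrib]
  | mul_X p j hp =>
    simp only [map_mul, aeval_X, pderiv_mul, hp, pderiv_X, map_add, add_mul,
      Finset.sum_add_distrib, Finset.sum_mul]
    congr 1
    · rw [Finset.sum_congr rfl]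
      intro k _; ring
    · rw [Finset.sum_eq_single j]
      · simp
      · intro k _ hk
        simp [Pi.single_apply, hk.symm]
      · simp

lemma aeval_eq_eval' {ι : Type*} (g : ι → ℚ) (p : MvPolynomial ι ℚ) :
    aeval g p = eval g p := by
  rw [aeval_def, eval, Algebra.algebraMap_self]; rfl

/-- Suppose `A₁,…,A_N ∈ ℚ[S,T]` specialize at `S := 0` to constants `α₁,…,α_N ∈ ℚ`,
and `Q₀,…,Q_{2^n-1} ∈ ℚ[Z₁,…,Z_N]` satisfy `Q_l(A₁,…,A_N) = c_l`. Then for every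
`t ∈ ℚ` the vector `(∑_{(p,q)} t^p·l^q)_{0≤l<2^n}` equals the Jacobian matrix
`((∂Q_l/∂Z_j)(α))_{l,j}` applied to the vector `((∂A_j/∂S)(0,t))_j`; in particular
it lies in the range of this Jacobian as a `ℚ`-linear map `ℚ^N → ℚ^{2^n}`. -/
theorem stmt8 (n : ℕ) (hn : 1 ≤ n) (N : ℕ)
    (A : Fin N → MvPolynomial (Fin 2) ℚ) (α : Fin N → ℚ)
    (hA : ∀ j, aeval ![(0 : Polynomial ℚ), Polynomial.X] (A j) = Polynomial.C (α j))
    (Q : Fin (2 ^ n) → MvPolynomial (Fin N) ℚ)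
    (hQ : ∀ l : Fin (2 ^ n), aeval A (Q l) = c n (l : ℕ))
    (t : ℚ) :
    (fun l : Fin (2 ^ n) =>
        ∑ pq ∈ pairs n, t ^ pq.1 * ((l : ℕ) : ℚ) ^ pq.2) =
      Matrix.mulVec
        (Matrix.of fun (l : Fin (2 ^ n)) (j : Fin N) => eval α (pderiv j (Q l)))
        (fun j : Fin N => eval ![(0 : ℚ), t] (pderiv (0 : Fin 2) (A j))) := by

  have hAt : ∀ j, aeval ![(0 : ℚ), t] (A j) = α j := by
    intro j
    have h := congrArg (Polynomial.aeval t : Polynomial ℚ →ₐ[ℚ] ℚ) (hA j)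
    rw [comp_aeval_apply] at h
    have h1 : (fun i => (Polynomial.aeval t : Polynomial ℚ →ₐ[ℚ] ℚ)
        (![(0 : Polynomial ℚ), Polynomial.X] i)) = ![(0 : ℚ), t] := by
      funext i; fin_cases i <;> simp
    rw [h1] at h
    simpa using h
  have hcomp : ∀ (P : MvPolynomial (Fin N) ℚ),
      eval ![(0 : ℚ), t] (aeval A P) = eval α P := by
    intro P
    rw [← aeval_eq_eval', ← aeval_eq_eval',
      comp_aeval_apply (f := A) (aeval ![(0 : ℚ), t] : MvPolynomial (Fin 2) ℚ →ₐ[ℚ] ℚ) P]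
    have : (fun i => aeval ![(0 : ℚ), t] (A i)) = α := funext hAt
    rw [this]
  funext l
  have key := congrArg (fun P => eval ![(0 : ℚ), t] (pderiv (0 : Fin 2) P)) (hQ l)
  simp only [chain] at key
  rw [show eval ![(0:ℚ), t] (pderiv (0 : Fin 2) (c n (l : ℕ)))
      = ∑ pq ∈ pairs n, t ^ pq.1 * ((l : ℕ) : ℚ) ^ pq.2 by
    simp [c, pderiv_mul]] at key
  rw [map_sum] at key
  simp only [map_mul, hcomp] at key
  rw [← key]
  simp [Matrix.mulVec, dotProduct]
end

section
/- Let n ≥ 1 and N ∈ ℕ. Suppose A₁,…,A_N ∈ ℚ[S,T] are polynomials such that each specialization A_j(0,T) ∈ ℚ[T] is a constant polynomial, and suppose there exist polynomials Q₀,…,Q_{2ⁿ−1} ∈ ℚ[Z₁,…,Z_N] with Q_l(A₁,…,A_N) = c_l in ℚ[S,T] for every 0 ≤ l < 2ⁿ. Then N ≥ 2ⁿ. -/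
open MvPolynomial

theorem Derivation.map_aeval_mem_span_of_map_eq_algebraMap {R S B σ : Type*} [CommRing R]
    [CommRing S] [Algebra R S] [CommRing B] [Algebra R B] (d : Derivation R S S)
    (φ : S →ₐ[R] B) {A : σ → S} {a : σ → R} (ha : ∀ j, φ (A j) = algebraMap R B (a j))
    (P : MvPolynomial σ R) :
    φ (d (aeval A P)) ∈ Submodule.span R (Set.range fun j => φ (d (A j))) := by
  have hφA : ∀ p : MvPolynomial σ R, φ (aeval A p) = algebraMap R B (aeval a p) := fun p => by
    rw [comp_aeval_apply, ← aeval_algebraMap_apply]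
    exact congrArg (aeval · p) (funext ha)
  induction P using MvPolynomial.induction_on with
  | C r => simp
  | add p q hp hq => simpa only [map_add] using Submodule.add_mem _ hp hq
  | mul_X p j hp =>
    rw [map_mul, aeval_X, Derivation.leibniz, map_add, smul_eq_mul, smul_eq_mul, map_mul, map_mul,
      hφA, ha, ← Algebra.smul_def, ← Algebra.smul_def]
    exact Submodule.add_mem _ (Submodule.smul_mem _ _ (Submodule.subset_span ⟨j, rfl⟩))
      (Submodule.smul_mem _ _ hp)

open Polynomial in
theorem linearIndependent_geom_sum₂_X_C {K : Type*} [Field K] {m : ℕ} {v : Fin m → K}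
    (hv : Function.Injective v) :
    LinearIndependent K fun l =>
      ∑ i ∈ Finset.range m, (X : K[X]) ^ i * Polynomial.C (v l) ^ (m - 1 - i) := by
  let κ : K[X] →ₗ[K] (Fin m → K) := LinearMap.pi fun p => lcoeff K (m - 1 - p)
  refine LinearIndependent.of_comp κ ?_
  have hκ : ⇑κ ∘ (fun l => ∑ i ∈ Finset.range m, (X : K[X]) ^ i * Polynomial.C (v l) ^ (m - 1 - i))
      = fun l => Matrix.vandermonde v l := by
    ext l p
    simp only [κ, Function.comp_apply, LinearMap.pi_apply, Polynomial.lcoeff_apply,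
      finsetSum_coeff, ← Polynomial.C_pow, X_pow_mul, coeff_C_mul_X_pow, Matrix.vandermonde_apply]
    rw [Finset.sum_ite_eq, if_pos (Finset.mem_range.2 (by omega)), Nat.sub_sub_self (by omega)]
  rw [hκ]
  exact Matrix.linearIndependent_rows_of_det_ne_zero (Matrix.det_vandermonde_ne_zero_iff.mpr hv)

open Finset in
theorem pairs_eq_antidiagonal (n : ℕ) : pairs n = antidiagonal (2 ^ n - 1) := by
  have := Nat.one_le_two_pow (n := n)
  ext ⟨p, q⟩
  simp only [pairs, mem_filter, mem_product, mem_range, HasAntidiagonal.mem_antidiagonal]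
  omega

theorem sum_pairs {M : Type*} [AddCommMonoid M] (n : ℕ) (f : ℕ × ℕ → M) :
    ∑ pq ∈ pairs n, f pq = ∑ i ∈ Finset.range (2 ^ n), f (i, 2 ^ n - 1 - i) := by
  rw [pairs_eq_antidiagonal, Finset.Nat.sum_antidiagonal_eq_sum_range_succ_mk,
    Nat.succ_eq_add_one, Nat.sub_add_cancel Nat.one_le_two_pow]

theorem aeval_pderiv_zero_c (n l : ℕ) :
    aeval ![(0 : Polynomial ℚ), Polynomial.X] (pderiv 0 (c n l)) =
      ∑ i ∈ Finset.range (2 ^ n), Polynomial.X ^ i * Polynomial.C (l : ℚ) ^ (2 ^ n - 1 - i) := by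
  have hT : pderiv (0 : Fin 2) (X 1 : MvPolynomial (Fin 2) ℚ) = 0 :=
    pderiv_X_of_ne (by decide)
  simp [c, Derivation.leibniz, hT, sum_pairs]

theorem stmt9_general (n : ℕ) (N : ℕ)
    (A : Fin N → MvPolynomial (Fin 2) ℚ)
    (hA : ∀ j, ∃ a : ℚ,
      aeval ![(0 : Polynomial ℚ), Polynomial.X] (A j) = Polynomial.C a)
    (Q : Fin (2 ^ n) → MvPolynomial (Fin N) ℚ)
    (hQ : ∀ l : Fin (2 ^ n), aeval A (Q l) = c n (l : ℕ)) :
    2 ^ n ≤ N := by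
  classical
  choose a ha using hA
  set φ := aeval (R := ℚ) ![(0 : Polynomial ℚ), Polynomial.X]
  let v : Fin N → Polynomial ℚ := fun j => φ (pderiv 0 (A j))
  let u : Fin (2 ^ n) → Polynomial ℚ := fun l => φ (pderiv 0 (c n l))
  have hu_mem : Set.range u ≤ Submodule.span ℚ (Set.range v) := by
    rintro _ ⟨l, rfl⟩
    rw [SetLike.mem_coe, show u l = φ (pderiv 0 (aeval A (Q l))) by rw [hQ l]]
    exact (pderiv 0).map_aeval_mem_span_of_map_eq_algebraMap φ
      (fun j => (ha j).trans (Polynomial.C_eq_algebraMap (a j))) (Q l)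
  have hu_indep : LinearIndependent ℚ u := by
    simp only [u, φ, aeval_pderiv_zero_c]
    exact linearIndependent_geom_sum₂_X_C fun _ _ h => Fin.ext (Nat.cast_injective h)
  calc 2 ^ n = Fintype.card (Fin (2 ^ n)) := (Fintype.card_fin _).symm
    _ ≤ Fintype.card (Set.range v) := linearIndependent_le_span_aux' u hu_indep _ hu_mem
    _ ≤ N := (Fintype.card_range_le v).trans (Fintype.card_fin N).le

/-- If `A₁,…,A_N ∈ ℚ[S,T]` specialize at `S := 0` to constant polynomials and there
exist `Q₀,…,Q_{2^n-1} ∈ ℚ[Z₁,…,Z_N]` with `Q_l(A₁,…,A_N) = c_l` for all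
`0 ≤ l < 2^n`, then `N ≥ 2^n`. -/
theorem stmt9 (n : ℕ) (hn : 1 ≤ n) (N : ℕ)
    (A : Fin N → MvPolynomial (Fin 2) ℚ)
    (hA : ∀ j, ∃ a : ℚ,
      aeval ![(0 : Polynomial ℚ), Polynomial.X] (A j) = Polynomial.C a)
    (Q : Fin (2 ^ n) → MvPolynomial (Fin N) ℚ)
    (hQ : ∀ l : Fin (2 ^ n), aeval A (Q l) = c n (l : ℕ)) :
    2 ^ n ≤ N :=
  stmt9_general n N A hA Q hQ
end
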